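/- Let A₁ and A₂ be two disjoint AO sets in G, and suppose A₂ is x̄_{A₁}-NO in G. Then for any pattern p, N(G*)p = 𝟏 if and only if N(G)p = x̄_{A₁∪A₂}. Moreover, A₁ and A₂ are AO in G*, and ν(G*) = ν(G). -/

import Mathlib

open Matrix
open scoped Classical

/-- The closed neighborhood matrix of a simple graph over `ℤ₂`:
`N(G) u v = 1` iff `u = v` or `u` is adjacent to `v`. -/
noncomputable def nbhdMatrix {V : Type*} [Fintype V] (G : SimpleGraph V) :
    Matrix V V (ZMod 2) :=
  Matrix.of fun u v => if u = v ∨ G.Adj u v then 1 else 0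

/-- The nullity of a matrix over `ℤ₂`: the dimension of its kernel. -/
noncomputable def nullityM {V : Type*} [Fintype V] (M : Matrix V V (ZMod 2)) : ℕ :=
  Module.finrank (ZMod 2) (LinearMap.ker M.mulVecLin)

/-- The nullity `ν(G)` of a graph. -/
noncomputable def graphNullity {V : Type*} [Fintype V] (G : SimpleGraph V) : ℕ :=
  nullityM (nbhdMatrix G)

/-- Characteristic vector of a set of vertices. -/
noncomputable def chi {V : Type*} (A : Set V) : V → ZMod 2 :=
  fun v => if v ∈ A then 1 else 0

/-- A configuration `c` is solvable (w.r.t. the matrix `M`) if `M p = c` for some pattern `p`. -/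
def Solv {V : Type*} [Fintype V] (M : Matrix V V (ZMod 2)) (c : V → ZMod 2) : Prop :=
  ∃ p : V → ZMod 2, M.mulVec p = c

/-- `A` is `c`-always odd activated: `A` is solvable and `x_A · p = 1` for every solving
pattern `p` for `c`. -/
def cAO {V : Type*} [Fintype V] (M : Matrix V V (ZMod 2)) (c : V → ZMod 2)
    (A : Set V) : Prop :=
  Solv M (chi A) ∧ ∀ p : V → ZMod 2, M.mulVec p = c → chi A ⬝ᵥ p = 1

/-- `A` is `c`-never odd activated: `A` is solvable and `x_A · p = 0` for every solving
pattern `p` for `c`. -/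
def cNO {V : Type*} [Fintype V] (M : Matrix V V (ZMod 2)) (c : V → ZMod 2)
    (A : Set V) : Prop :=
  Solv M (chi A) ∧ ∀ p : V → ZMod 2, M.mulVec p = c → chi A ⬝ᵥ p = 0

/-- `A` is always odd activated (AO): `𝟏`-always odd activated. -/
def AO {V : Type*} [Fintype V] (M : Matrix V V (ZMod 2)) (A : Set V) : Prop :=
  cAO M 1 A

/-- `A` is never odd activated (NO): `𝟏`-never odd activated. -/
def NO {V : Type*} [Fintype V] (M : Matrix V V (ZMod 2)) (A : Set V) : Prop :=
  cNO M 1 A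

/-- `A` is half odd activated (HO): `x_A` is not solvable. -/
def HO {V : Type*} [Fintype V] (M : Matrix V V (ZMod 2)) (A : Set V) : Prop :=
  ¬ Solv M (chi A)

/-- The closed neighborhood matrix of the graph `G*` obtained from `G` by toggling every
pair of vertices between the disjoint sets `A₁` and `A₂`:
`N(G*) = N(G) + x_{A₁} x_{A₂}ᵗ + x_{A₂} x_{A₁}ᵗ` over `ℤ₂`. -/
noncomputable def starMatrix {V : Type*} [Fintype V] (G : SimpleGraph V)
    (A₁ A₂ : Set V) : Matrix V V (ZMod 2) :=
  nbhdMatrix G + Matrix.vecMulVec (chi A₁) (chi A₂) + Matrix.vecMulVec (chi A₂) (chi A₁)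

/-!
Everything is read off through the symmetry of `N = N(G)`: if `N r = x_A` then
`x_A · p = r · N p`, so the parity with which a pattern activates `A` depends only on the
configuration it solves. Sutner's theorem (`𝟏` is solvable, because `x · N x = 𝟏 · x` over `ℤ₂`)
turns the hypotheses into the six parities `r · c = q · c = 1` for `c ∈ {𝟏, x_{A₁}, x_{A₂}}`, where
`N r = x_{A₁}` and `N q = x_{A₂}`. Writing `y = N p`, the equation `N(G*) p = d` becomes
`y = d + (q · y) x_{A₁} + (r · y) x_{A₂}`, and pairing with `r` and `q` forces both coefficients
to be `r · d`. The cases `d = 𝟏` and `d = 0` give the odd dominating patterns and the kernel of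
`N(G*)`.
-/

theorem chi_union_of_disjoint {V : Type*} {A₁ A₂ : Set V} (hd : Disjoint A₁ A₂) :
    chi (A₁ ∪ A₂) = chi A₁ + chi A₂ := by
  ext v
  by_cases h₁ : v ∈ A₁
  · simp [chi, h₁, Set.disjoint_left.mp hd h₁]
  · simp [chi, h₁]

section

variable {V : Type*} [Fintype V]

namespace Matrix.IsSymm

theorem mulVec_dotProduct {R : Type*} [CommSemiring R] {M : Matrix V V R} (hM : M.IsSymm)
    (x y : V → R) : M *ᵥ x ⬝ᵥ y = x ⬝ᵥ M *ᵥ y := by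
  rw [dotProduct_mulVec, ← vecMul_transpose, hM.eq]

variable {M : Matrix V V (ZMod 2)}

theorem dotProduct_mulVec_self (hM : M.IsSymm) (x : V → ZMod 2) :
    x ⬝ᵥ M *ᵥ x = M.diag ⬝ᵥ x := by
  classical
  induction x using Pi.single_induction with
  | zero => simp
  | add x y hx hy =>
    have hcross : x ⬝ᵥ M *ᵥ y + y ⬝ᵥ M *ᵥ x = 0 := by
      rw [← hM.mulVec_dotProduct y x, dotProduct_comm, ZModModule.add_self]
    simp only [mulVec_add, add_dotProduct, dotProduct_add]
    linear_combination hx + hy + hcross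
  | single i m =>
    simp only [mulVec_single, op_smul_eq_smul, dotProduct_smul, single_dotProduct, col_apply,
      smul_eq_mul, dotProduct_single, diag_apply]
    linear_combination M i i * ZMod.pow_card m

theorem exists_mulVec_eq_diag (hM : M.IsSymm) : ∃ s, M *ᵥ s = M.diag := by
  classical
  by_contra h
  obtain ⟨f, hf, hrange⟩ := Submodule.exists_le_ker_of_notMem
    (p := LinearMap.range M.mulVecLin) (v := M.diag) (by rintro ⟨s, hs⟩; exact h ⟨s, hs⟩)
  set k := (dotProductEquiv (ZMod 2) V).symm f
  have hfk : ∀ x, f x = k ⬝ᵥ x := fun x => by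
    rw [← dotProductEquiv_apply_apply, LinearEquiv.apply_symm_apply]
  have hk : M *ᵥ k = 0 := by
    ext i
    have hi := hrange ⟨Pi.single i 1, rfl⟩
    rwa [LinearMap.mem_ker, mulVecLin_apply, hfk, ← hM.mulVec_dotProduct, dotProduct_single_one] at hi
  apply hf
  rw [hfk, dotProduct_comm, ← hM.dotProduct_mulVec_self, hk, dotProduct_zero]

end Matrix.IsSymm

theorem nbhdMatrix_isSymm (G : SimpleGraph V) : (nbhdMatrix G).IsSymm := by
  ext u v
  simp only [transpose_apply, nbhdMatrix, of_apply, eq_comm (a := v), G.adj_comm]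

theorem diag_nbhdMatrix (G : SimpleGraph V) : (nbhdMatrix G).diag = 1 := by
  ext v
  simp [nbhdMatrix]

theorem solv_nbhdMatrix_one (G : SimpleGraph V) : Solv (nbhdMatrix G) 1 := by
  unfold Solv
  simpa only [diag_nbhdMatrix] using (nbhdMatrix_isSymm G).exists_mulVec_eq_diag

section Activation

variable {M : Matrix V V (ZMod 2)} {c : V → ZMod 2} {A : Set V} {r : V → ZMod 2}

theorem cAO.dotProduct_eq_one (h : cAO M c A) (hM : M.IsSymm) (hc : Solv M c)
    (hr : M *ᵥ r = chi A) : r ⬝ᵥ c = 1 := by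
  obtain ⟨p, hp⟩ := hc
  rw [← hp, ← hM.mulVec_dotProduct, hr]
  exact h.2 p hp

theorem cNO.dotProduct_eq_zero (h : cNO M c A) (hM : M.IsSymm) (hc : Solv M c)
    (hr : M *ᵥ r = chi A) : r ⬝ᵥ c = 0 := by
  obtain ⟨p, hp⟩ := hc
  rw [← hp, ← hM.mulVec_dotProduct, hr]
  exact h.2 p hp

end Activation

section Toggle

variable {a b r q d y : V → ZMod 2}

theorem eq_add_smul_add_smul_iff (hra : r ⬝ᵥ a = 1) (hrb : r ⬝ᵥ b = 1) (hqa : q ⬝ᵥ a = 1)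
    (hqb : q ⬝ᵥ b = 1) (hd : r ⬝ᵥ d = q ⬝ᵥ d) :
    y = d + (q ⬝ᵥ y) • a + (r ⬝ᵥ y) • b ↔ y = d + (r ⬝ᵥ d) • (a + b) := by
  constructor
  · intro hy
    have hry := congrArg (r ⬝ᵥ ·) hy
    have hqy := congrArg (q ⬝ᵥ ·) hy
    simp only [dotProduct_add, dotProduct_smul, smul_eq_mul, hra, hrb, hqa, hqb, mul_one]
      at hry hqy
    rw [show q ⬝ᵥ y = r ⬝ᵥ d by grind, show r ⬝ᵥ y = r ⬝ᵥ d by grind] at hy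
    rw [hy]
    module
  · intro hy
    have hry : r ⬝ᵥ y = r ⬝ᵥ d := by
      simp only [hy, dotProduct_add, dotProduct_smul, smul_eq_mul, hra, hrb]
      grind
    have hqy : q ⬝ᵥ y = r ⬝ᵥ d := by
      simp only [hy, dotProduct_add, dotProduct_smul, smul_eq_mul, hqa, hqb, hd]
      grind
    rw [hry, hqy, hy]
    module

theorem Matrix.IsSymm.add_vecMulVec_add_vecMulVec_mulVec_eq_iff {M : Matrix V V (ZMod 2)}
    (hM : M.IsSymm) (hr : M *ᵥ r = a) (hq : M *ᵥ q = b) (hra : r ⬝ᵥ a = 1) (hrb : r ⬝ᵥ b = 1)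
    (hqa : q ⬝ᵥ a = 1) (hqb : q ⬝ᵥ b = 1) (hd : r ⬝ᵥ d = q ⬝ᵥ d) (p : V → ZMod 2) :
    (M + vecMulVec a b + vecMulVec b a) *ᵥ p = d ↔ M *ᵥ p = d + (r ⬝ᵥ d) • (a + b) := by
  have hap : a ⬝ᵥ p = r ⬝ᵥ M *ᵥ p := by rw [← hr, hM.mulVec_dotProduct]
  have hbp : b ⬝ᵥ p = q ⬝ᵥ M *ᵥ p := by rw [← hq, hM.mulVec_dotProduct]
  rw [← eq_add_smul_add_smul_iff hra hrb hqa hqb hd, add_mulVec, add_mulVec, vecMulVec_mulVec,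
    vecMulVec_mulVec, op_smul_eq_smul, op_smul_eq_smul, hap, hbp, add_assoc, add_assoc,
    ← eq_sub_iff_add_eq, ZModModule.sub_eq_add]

end Toggle

section Graph

variable {G : SimpleGraph V} {A : Set V} {r : V → ZMod 2}

theorem dotProduct_chi_eq_dotProduct_one (hr : nbhdMatrix G *ᵥ r = chi A) :
    r ⬝ᵥ chi A = r ⬝ᵥ 1 := by
  rw [← hr, (nbhdMatrix_isSymm G).dotProduct_mulVec_self, diag_nbhdMatrix, dotProduct_comm]

theorem AO.dotProduct_one_eq_one (h : AO (nbhdMatrix G) A) (hr : nbhdMatrix G *ᵥ r = chi A) :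
    r ⬝ᵥ 1 = 1 :=
  cAO.dotProduct_eq_one h (nbhdMatrix_isSymm G) (solv_nbhdMatrix_one G) hr

end Graph

section Star

variable {G : SimpleGraph V} {A₁ A₂ : Set V} {r q : V → ZMod 2}

theorem starMatrix_comm : starMatrix G A₁ A₂ = starMatrix G A₂ A₁ :=
  add_right_comm _ _ _

theorem starMatrix_mulVec_eq_iff (hr : nbhdMatrix G *ᵥ r = chi A₁)
    (hq : nbhdMatrix G *ᵥ q = chi A₂) (hra : r ⬝ᵥ chi A₁ = 1) (hrb : r ⬝ᵥ chi A₂ = 1)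
    (hqa : q ⬝ᵥ chi A₁ = 1) (hqb : q ⬝ᵥ chi A₂ = 1) {d : V → ZMod 2} (hd : r ⬝ᵥ d = q ⬝ᵥ d)
    (p : V → ZMod 2) :
    starMatrix G A₁ A₂ *ᵥ p = d ↔ nbhdMatrix G *ᵥ p = d + (r ⬝ᵥ d) • (chi A₁ + chi A₂) :=
  (nbhdMatrix_isSymm G).add_vecMulVec_add_vecMulVec_mulVec_eq_iff hr hq hra hrb hqa hqb hd p

theorem starMatrix_mulVec_eq_one_iff (hd : Disjoint A₁ A₂) (hr : nbhdMatrix G *ᵥ r = chi A₁)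
    (hq : nbhdMatrix G *ᵥ q = chi A₂) (hra : r ⬝ᵥ chi A₁ = 1) (hrb : r ⬝ᵥ chi A₂ = 1)
    (hqa : q ⬝ᵥ chi A₁ = 1) (hqb : q ⬝ᵥ chi A₂ = 1) (p : V → ZMod 2) :
    starMatrix G A₁ A₂ *ᵥ p = 1 ↔ nbhdMatrix G *ᵥ p = chi (A₁ ∪ A₂) + 1 := by
  have hr1 : r ⬝ᵥ 1 = 1 := (dotProduct_chi_eq_dotProduct_one hr).symm.trans hra
  have hq1 : q ⬝ᵥ 1 = 1 := (dotProduct_chi_eq_dotProduct_one hq).symm.trans hqb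
  rw [starMatrix_mulVec_eq_iff hr hq hra hrb hqa hqb (hr1.trans hq1.symm), hr1, one_smul,
    chi_union_of_disjoint hd, add_comm]

theorem aO_starMatrix_left (hd : Disjoint A₁ A₂) (hr : nbhdMatrix G *ᵥ r = chi A₁)
    (hq : nbhdMatrix G *ᵥ q = chi A₂) (hra : r ⬝ᵥ chi A₁ = 1) (hrb : r ⬝ᵥ chi A₂ = 1)
    (hqa : q ⬝ᵥ chi A₁ = 1) (hqb : q ⬝ᵥ chi A₂ = 1) : AO (starMatrix G A₁ A₂) A₁ := by
  refine ⟨⟨q, ?_⟩, fun p hp => ?_⟩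
  · rw [starMatrix_mulVec_eq_iff hr hq hra hrb hqa hqb (hra.trans hqa.symm), hra, one_smul, hq,
      ← add_assoc, ZModModule.add_self, zero_add]
  · rw [← hr, (nbhdMatrix_isSymm G).mulVec_dotProduct,
      (starMatrix_mulVec_eq_one_iff hd hr hq hra hrb hqa hqb p).1 hp, chi_union_of_disjoint hd,
      dotProduct_add, dotProduct_add, hra, hrb, ← dotProduct_chi_eq_dotProduct_one hr, hra]
    decide

theorem nullityM_starMatrix (hr : nbhdMatrix G *ᵥ r = chi A₁)
    (hq : nbhdMatrix G *ᵥ q = chi A₂) (hra : r ⬝ᵥ chi A₁ = 1) (hrb : r ⬝ᵥ chi A₂ = 1)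
    (hqa : q ⬝ᵥ chi A₁ = 1) (hqb : q ⬝ᵥ chi A₂ = 1) :
    nullityM (starMatrix G A₁ A₂) = nullityM (nbhdMatrix G) := by
  have hker : LinearMap.ker (starMatrix G A₁ A₂).mulVecLin =
      LinearMap.ker (nbhdMatrix G).mulVecLin := by
    ext k
    simp [starMatrix_mulVec_eq_iff hr hq hra hrb hqa hqb (d := 0) (by simp)]
  rw [nullityM, nullityM, hker]

end Star

end

/-- Proposition (AO, AO, `x̄_{A₁}`-NO): the odd dominating patterns of `G*` are exactly
the solving patterns of `x̄_{A₁∪A₂}` in `G`; `A₁` and `A₂` are AO in `G*`, and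
`ν(G*) = ν(G)`. -/
theorem stmt14 {V : Type*} [Fintype V] (G : SimpleGraph V) (A₁ A₂ : Set V)
    (hd : Disjoint A₁ A₂)
    (h1 : AO (nbhdMatrix G) A₁) (h2 : AO (nbhdMatrix G) A₂)
    (h3 : cNO (nbhdMatrix G) (chi A₁ + 1) A₂) :
    (∀ p : V → ZMod 2, (starMatrix G A₁ A₂).mulVec p = 1 ↔
      (nbhdMatrix G).mulVec p = chi (A₁ ∪ A₂) + 1) ∧
    AO (starMatrix G A₁ A₂) A₁ ∧ AO (starMatrix G A₁ A₂) A₂ ∧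
    nullityM (starMatrix G A₁ A₂) = nullityM (nbhdMatrix G) := by
  have hM := nbhdMatrix_isSymm G
  obtain ⟨r, hr⟩ := h1.1
  obtain ⟨q, hq⟩ := h2.1
  have hq1 := h2.dotProduct_one_eq_one hq
  have hra := (dotProduct_chi_eq_dotProduct_one hr).trans (h1.dotProduct_one_eq_one hr)
  have hqb := (dotProduct_chi_eq_dotProduct_one hq).trans hq1
  have hqa : q ⬝ᵥ chi A₁ = 1 := by
    obtain ⟨s, hs⟩ := solv_nbhdMatrix_one G
    have h := h3.dotProduct_eq_zero hM ⟨s + r, by rw [mulVec_add, hs, hr, add_comm]⟩ hq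
    rw [dotProduct_add, hq1] at h
    grind
  have hrb : r ⬝ᵥ chi A₂ = 1 := by
    rw [← hq, ← hM.mulVec_dotProduct, hr, dotProduct_comm, hqa]
  refine ⟨starMatrix_mulVec_eq_one_iff hd hr hq hra hrb hqa hqb,
    aO_starMatrix_left hd hr hq hra hrb hqa hqb, ?_, nullityM_starMatrix hr hq hra hrb hqa hqb⟩
  rw [starMatrix_comm]
  exact aO_starMatrix_left hd.symm hq hr hqb hqa hrb hra
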